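/- Let U : (0,∞) → ℝ be C² with U′ > 0 and r ↦ r³U′(r) strictly increasing, fix E, and suppose r* > 0 solves E − U(r) − (r/2)U′(r) = 0; set L_max = √(r*³U′(r*)) and assume φ_eff″(r*; L_max) > 0, where φ_eff(r; L) = U(r) + L²/(2r²). For 0 < L < L_max let r₁(E,L) < r₂(E,L) be the two roots of E − U(r) − L²/(2r²) = 0 and T(E,L) = ∫_{r₁(E,L)}^{r₂(E,L)} dr/√(2(E − U(r) − L²/(2r²))). Then lim_{L→L_max⁻} T(E,L) = π/√(φ_eff″(r*; L_max)). -/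

import Mathlib

/-!
Write `f_L(r) = E − φ_eff(r; L)`. Since `f_L′(r) = (L² − r³U′(r))/r³` and `r³U′` is strictly
increasing, `f_L` is quasiconcave on `(0, ∞)`, and `f_{L_max}` has the strict maximum `0` at `r*`.
As `f_L(r*) > 0` for `L < L_max`, the turning points `r₁ < r₂` are squeezed to `r*` as
`L → L_max⁻`, so on `[r₁, r₂]` the curvature `−f_L″ = φ_eff″(·; L)` lies in `[K − ε, K + ε]`,
`K = φ_eff″(r*; L_max)`. Then `2 f_L` lies between the parabolas `(K ± ε)(r₂ − r)(r − r₁)`, which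
agree with it at the endpoints, and since `∫_a^b dr / √((b − r)(r − a)) = π` (an `arcsin`), the
period lies between `π/√(K + ε)` and `π/√(K − ε)`.
-/

open MeasureTheory Real Set Filter Topology intervalIntegral

theorem hasDerivAt_arcsin_affine {a b x : ℝ} (hx : x ∈ Ioo a b) :
    HasDerivAt (fun r => arcsin ((2 * r - (a + b)) / (b - a))) (1 / √((b - x) * (x - a))) x := by
  obtain ⟨hax, hxb⟩ := hx
  have hba : 0 < b - a := by linarith
  set u := (2 * x - (a + b)) / (b - a) with hu
  have hu_gt : -1 < u := by rw [hu, lt_div_iff₀ hba]; linarith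
  have hu_lt : u < 1 := by rw [hu, div_lt_iff₀ hba]; linarith
  have hsqrt : √(1 - u ^ 2) * (b - a) = 2 * √((b - x) * (x - a)) := by
    rw [← sqrt_sq hba.le, ← sqrt_sq (zero_le_two (α := ℝ)), ← sqrt_mul, ← sqrt_mul]
    · congr 1; rw [hu]; field_simp; ring
    all_goals nlinarith
  have hinner : HasDerivAt (fun r => (2 * r - (a + b)) / (b - a)) (2 / (b - a)) x := by
    simpa using (((hasDerivAt_id x).const_mul 2).sub_const (a + b)).div_const (b - a)
  refine ((hasDerivAt_arcsin hu_gt.ne' hu_lt.ne).comp x hinner).congr_deriv ?_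
  rw [div_mul_div_comm, one_mul, hsqrt, div_mul_cancel_left₀ two_ne_zero, one_div]

theorem intervalIntegrable_one_div_sqrt_mul_sub_mul_sub {a b : ℝ} (hab : a ≤ b) :
    IntervalIntegrable (fun x => 1 / √((b - x) * (x - a))) volume a b :=
  (intervalIntegrable_iff_integrableOn_Ioc_of_le hab).2 <|
    integrableOn_deriv_of_nonneg (by fun_prop) (fun _ hx => hasDerivAt_arcsin_affine hx)
      (fun _ _ => by positivity)

theorem integral_one_div_sqrt_mul_sub_mul_sub {a b : ℝ} (hab : a < b) :
    ∫ x in a..b, 1 / √((b - x) * (x - a)) = π := by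
  rw [integral_eq_sub_of_hasDerivAt_of_le hab.le (by fun_prop)
    (fun _ hx => hasDerivAt_arcsin_affine hx)
    (intervalIntegrable_one_div_sqrt_mul_sub_mul_sub hab.le)]
  have hba : b - a ≠ 0 := by linarith
  have h1 : (2 * b - (a + b)) / (b - a) = 1 := by field_simp; ring
  have h2 : (2 * a - (a + b)) / (b - a) = -1 := by field_simp; ring
  simp only [h1, h2, arcsin_one, arcsin_neg_one]
  ring

theorem nonpos_on_Icc_of_hasDerivAt2_nonneg {g g' g'' : ℝ → ℝ} {a b : ℝ}
    (hg : ContinuousOn g (Icc a b)) (hg' : ∀ x ∈ Ioo a b, HasDerivAt g (g' x) x)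
    (hg'' : ∀ x ∈ Ioo a b, HasDerivAt g' (g'' x) x) (hconv : ∀ x ∈ Ioo a b, 0 ≤ g'' x)
    (ha : g a = 0) (hb : g b = 0) {x : ℝ} (hx : x ∈ Icc a b) : g x ≤ 0 := by
  have hab : a ≤ b := hx.1.trans hx.2
  have hconvex : ConvexOn ℝ (Icc a b) g := by
    refine convexOn_of_hasDerivWithinAt2_nonneg (f' := g') (f'' := g'') (convex_Icc a b) hg
      ?_ ?_ ?_ <;> simp only [interior_Icc]
    exacts [fun x hx => (hg' x hx).hasDerivWithinAt, fun x hx => (hg'' x hx).hasDerivWithinAt,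
      hconv]
  simpa [ha, hb] using hconvex.le_max_of_mem_Icc (left_mem_Icc.2 hab) (right_mem_Icc.2 hab) hx

theorem two_mul_mem_Icc_of_neg_deriv2_mem_Icc {f f' f'' : ℝ → ℝ} {a b m M : ℝ}
    (hf : ContinuousOn f (Icc a b)) (hf' : ∀ x ∈ Ioo a b, HasDerivAt f (f' x) x)
    (hf'' : ∀ x ∈ Ioo a b, HasDerivAt f' (f'' x) x) (hcurv : ∀ x ∈ Ioo a b, -f'' x ∈ Icc m M)
    (ha : f a = 0) (hb : f b = 0) {x : ℝ} (hx : x ∈ Icc a b) :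
    2 * f x ∈ Icc (m * ((b - x) * (x - a))) (M * ((b - x) * (x - a))) := by
  have hq' : ∀ x, HasDerivAt (fun x => (b - x) * (x - a)) (a + b - 2 * x) x := fun x =>
    (((hasDerivAt_id x).const_sub b).mul ((hasDerivAt_id x).sub_const a)).congr_deriv
      (by simp only [id]; ring)
  have hq'' : ∀ x, HasDerivAt (fun x => a + b - 2 * x) (-2) x := fun x =>
    (((hasDerivAt_id x).const_mul 2).const_sub (a + b)).congr_deriv (by simp)
  constructor
  · refine sub_nonpos.1 <| nonpos_on_Icc_of_hasDerivAt2_nonneg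
      (g := fun x => m * ((b - x) * (x - a)) - 2 * f x) (by fun_prop)
      (fun x hx => ((hq' x).const_mul m).sub ((hf' x hx).const_mul 2))
      (fun x hx => ((hq'' x).const_mul m).sub ((hf'' x hx).const_mul 2))
      (fun x hx => by linarith [(hcurv x hx).1]) (by simp [ha]) (by simp [hb]) hx
  · refine sub_nonpos.1 <| nonpos_on_Icc_of_hasDerivAt2_nonneg
      (g := fun x => 2 * f x - M * ((b - x) * (x - a))) (by fun_prop)
      (fun x hx => ((hf' x hx).const_mul 2).sub ((hq' x).const_mul M))
      (fun x hx => ((hf'' x hx).const_mul 2).sub ((hq'' x).const_mul M))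
      (fun x hx => by linarith [(hcurv x hx).2]) (by simp [ha]) (by simp [hb]) hx

theorem integral_one_div_sqrt_two_mul_mem_Icc {f f' f'' : ℝ → ℝ} {a b m M : ℝ} (hab : a < b)
    (hm : 0 < m) (hf : ContinuousOn f (Icc a b)) (hf' : ∀ x ∈ Ioo a b, HasDerivAt f (f' x) x)
    (hf'' : ∀ x ∈ Ioo a b, HasDerivAt f' (f'' x) x) (hcurv : ∀ x ∈ Ioo a b, -f'' x ∈ Icc m M)
    (ha : f a = 0) (hb : f b = 0) :
    ∫ x in a..b, 1 / √(2 * f x) ∈ Icc (π / √M) (π / √m) := by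
  set q : ℝ → ℝ := fun x => (b - x) * (x - a)
  have hmM : m ≤ M := (hcurv _ ⟨left_lt_add_div_two.2 hab, add_div_two_lt_right.2 hab⟩).1.trans
    (hcurv _ ⟨left_lt_add_div_two.2 hab, add_div_two_lt_right.2 hab⟩).2
  have hmodel : ∀ c, 0 < c → ∀ x ∈ Ioo a b, 1 / √(c * q x) = (√c)⁻¹ * (1 / √(q x)) :=
    fun c hc x _ => by rw [sqrt_mul hc.le, one_div, mul_inv, one_div]
  have hbound : ∀ x ∈ Ioo a b,
      1 / √(2 * f x) ∈ Icc ((√M)⁻¹ * (1 / √(q x))) ((√m)⁻¹ * (1 / √(q x))) := by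
    intro x hx
    have hqx : 0 < q x := mul_pos (by linarith [hx.2]) (by linarith [hx.1])
    obtain ⟨hlow, hupp⟩ :=
      two_mul_mem_Icc_of_neg_deriv2_mem_Icc hf hf' hf'' hcurv ha hb (Ioo_subset_Icc_self hx)
    rw [← hmodel m hm x hx, ← hmodel M (hm.trans_le hmM) x hx]
    exact ⟨one_div_le_one_div_of_le (sqrt_pos.2 ((mul_pos hm hqx).trans_le hlow))
      (sqrt_le_sqrt hupp),
      one_div_le_one_div_of_le (sqrt_pos.2 (mul_pos hm hqx)) (sqrt_le_sqrt hlow)⟩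
  have hint_model : ∀ c, IntervalIntegrable (fun x => c * (1 / √(q x))) volume a b :=
    fun c => (intervalIntegrable_one_div_sqrt_mul_sub_mul_sub hab.le).const_mul c
  have hint : IntervalIntegrable (fun x => 1 / √(2 * f x)) volume a b := by
    refine (intervalIntegrable_iff_integrableOn_Ioo_of_le hab.le).2 <|
      ((intervalIntegrable_iff_integrableOn_Ioo_of_le hab.le).1 (hint_model (√m)⁻¹)).mono' ?_ ?_
    · exact ((by fun_prop : Measurable fun y : ℝ => 1 / √(2 * y)).comp_aemeasurable
        ((hf.mono Ioo_subset_Icc_self).aemeasurable measurableSet_Ioo)).aestronglyMeasurable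
    · exact ae_restrict_of_forall_mem measurableSet_Ioo fun x hx => by
        rw [norm_of_nonneg (by positivity)]; exact (hbound x hx).2
  have hintegral : ∀ c, ∫ x in a..b, (√c)⁻¹ * (1 / √(q x)) = π / √c := fun c => by
    rw [intervalIntegral.integral_const_mul, integral_one_div_sqrt_mul_sub_mul_sub hab,
      div_eq_inv_mul]
  exact ⟨hintegral M ▸ integral_mono_on_of_le_Ioo hab.le (hint_model _) hint
      fun x hx => (hbound x hx).1,
    hintegral m ▸ integral_mono_on_of_le_Ioo hab.le hint (hint_model _)
      fun x hx => (hbound x hx).2⟩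

theorem tendsto_of_eventually_mem_Icc {α ι : Type*} {l : Filter α} {lε : Filter ι} [lε.NeBot]
    {T : α → ℝ} {lo hi : ι → ℝ} {c : ℝ} (hlo : Tendsto lo lε (𝓝 c)) (hhi : Tendsto hi lε (𝓝 c))
    (h : ∀ᶠ ε in lε, ∀ᶠ x in l, T x ∈ Icc (lo ε) (hi ε)) : Tendsto T l (𝓝 c) := by
  refine tendsto_order.2 ⟨fun a ha => ?_, fun a ha => ?_⟩
  · obtain ⟨ε, hε, hlo⟩ := (h.and (hlo.eventually (lt_mem_nhds ha))).exists
    filter_upwards [hε] with x hx using hlo.trans_le hx.1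
  · obtain ⟨ε, hε, hhi⟩ := (h.and (hhi.eventually (gt_mem_nhds ha))).exists
    filter_upwards [hε] with x hx using hx.2.trans_lt hhi

theorem tendsto_div_sqrt_add_mul (c : ℝ) {K : ℝ} (hK : 0 < K) (s : ℝ) :
    Tendsto (fun ε => c / √(K + s * ε)) (𝓝 0) (𝓝 (c / √K)) := by
  have : ContinuousAt (fun ε => c / √(K + s * ε)) 0 :=
    continuousAt_const.div (by fun_prop) (by simpa using (sqrt_pos.2 hK).ne')
  simpa using this.tendsto

theorem eventually_forall_mem_of_tendsto_smallSets {α β : Type*} [TopologicalSpace α]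
    [TopologicalSpace β] {p : α × β → Prop} {a : α} {b : β} (hp : ∀ᶠ z in 𝓝 (a, b), p z)
    {l : Filter α} (hl : l ≤ 𝓝 a) {S : α → Set β} (hS : Tendsto S l (𝓝 b).smallSets) :
    ∀ᶠ x in l, ∀ y ∈ S x, p (x, y) := by
  rw [nhds_prod_eq] at hp
  obtain ⟨pa, hpa, pb, hpb, hp⟩ := eventually_prod_iff.1 hp
  filter_upwards [hl hpa, hS.eventually (eventually_smallSets_forall.2 hpb)] with x hx hSx
  exact fun y hy => hp hx (hSx y hy)

/-- `E - φ_eff(r; L)`, i.e. half the squared radial velocity. -/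
noncomputable def radialKineticEnergy (U : ℝ → ℝ) (E L r : ℝ) : ℝ :=
  E - U r - L ^ 2 / (2 * r ^ 2)

noncomputable def effPotentialCurvature (U : ℝ → ℝ) (L r : ℝ) : ℝ :=
  deriv (deriv U) r + 3 * L ^ 2 / r ^ 4

section RadialMotion

variable {U : ℝ → ℝ} {E L r : ℝ}

theorem continuousOn_radialKineticEnergy (hU : ContinuousOn U (Ioi 0)) :
    ContinuousOn (radialKineticEnergy U E L) (Ioi 0) := by
  unfold radialKineticEnergy
  exact (continuousOn_const.sub hU).sub <|
    continuousOn_const.div (by fun_prop) fun x (hx : 0 < x) => by positivity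

theorem hasDerivAt_radialKineticEnergy (hU : DifferentiableAt ℝ U r) (hr : r ≠ 0) :
    HasDerivAt (radialKineticEnergy U E L) (L ^ 2 / r ^ 3 - deriv U r) r := by
  have hcentrifugal := (hasDerivAt_const r (L ^ 2)).div ((hasDerivAt_pow 2 r).const_mul 2)
    (by positivity)
  exact (((hasDerivAt_const r E).sub hU.hasDerivAt).sub hcentrifugal).congr_deriv
    (by field_simp; ring)

theorem hasDerivAt_deriv_radialKineticEnergy (hU : DifferentiableAt ℝ (deriv U) r)
    (hr : r ≠ 0) :
    HasDerivAt (fun x => L ^ 2 / x ^ 3 - deriv U x) (-effPotentialCurvature U L r) r := by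
  have hcentrifugal := (hasDerivAt_const r (L ^ 2)).div (hasDerivAt_pow 3 r) (by positivity)
  exact (hcentrifugal.sub hU.hasDerivAt).congr_deriv
    (by unfold effPotentialCurvature; field_simp; ring)

theorem continuousAt_effPotentialCurvature (hU : ContinuousAt (deriv (deriv U)) r) (hr : r ≠ 0) :
    ContinuousAt (fun p : ℝ × ℝ => effPotentialCurvature U p.1 p.2) (L, r) := by
  unfold effPotentialCurvature
  fun_prop (disch := exact pow_ne_zero 4 hr)

theorem strictMonoOn_radialKineticEnergy (hU : DifferentiableOn ℝ U (Ioi 0))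
    (hmono : StrictMonoOn (fun r => r ^ 3 * deriv U r) (Ioi 0)) {ρ : ℝ}
    (hρ : ρ ^ 3 * deriv U ρ ≤ L ^ 2) :
    StrictMonoOn (radialKineticEnergy U E L) (Ioc 0 ρ) := by
  refine strictMonoOn_of_deriv_pos (convex_Ioc 0 ρ)
    ((continuousOn_radialKineticEnergy hU.continuousOn).mono Ioc_subset_Ioi_self) ?_
  rw [interior_Ioc]
  rintro x ⟨hx, hxρ⟩
  rw [(hasDerivAt_radialKineticEnergy (hU.differentiableAt (Ioi_mem_nhds hx)) hx.ne').deriv,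
    sub_pos, lt_div_iff₀ (by positivity)]
  linarith [hmono hx (hx.trans hxρ) hxρ]

theorem strictAntiOn_radialKineticEnergy (hU : DifferentiableOn ℝ U (Ioi 0))
    (hmono : StrictMonoOn (fun r => r ^ 3 * deriv U r) (Ioi 0)) {ρ : ℝ} (hρ₀ : 0 < ρ)
    (hρ : L ^ 2 ≤ ρ ^ 3 * deriv U ρ) :
    StrictAntiOn (radialKineticEnergy U E L) (Ici ρ) := by
  refine strictAntiOn_of_deriv_neg (convex_Ici ρ)
    ((continuousOn_radialKineticEnergy hU.continuousOn).mono fun x hx => hρ₀.trans_le hx) ?_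
  rw [interior_Ici]
  rintro x (hρx : ρ < x)
  have hx : 0 < x := hρ₀.trans hρx
  rw [(hasDerivAt_radialKineticEnergy (hU.differentiableAt (Ioi_mem_nhds hx)) hx.ne').deriv,
    sub_neg, div_lt_iff₀ (by positivity)]
  linarith [hmono hρ₀ hx hρx]

theorem min_radialKineticEnergy_le (hU : DifferentiableOn ℝ U (Ioi 0))
    (hmono : StrictMonoOn (fun r => r ^ 3 * deriv U r) (Ioi 0)) {p q w : ℝ} (hp : 0 < p)
    (hpq : p ≤ q) (hqw : q ≤ w) :
    min (radialKineticEnergy U E L p) (radialKineticEnergy U E L w) ≤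
      radialKineticEnergy U E L q := by
  rcases le_total (q ^ 3 * deriv U q) (L ^ 2) with hq | hq
  · exact min_le_of_left_le <| (strictMonoOn_radialKineticEnergy hU hmono hq).monotoneOn
      ⟨hp, hpq⟩ ⟨hp.trans_le hpq, le_rfl⟩ hpq
  · exact min_le_of_right_le <|
      (strictAntiOn_radialKineticEnergy hU hmono (hp.trans_le hpq) hq).antitoneOn
      self_mem_Ici (mem_Ici.2 hqw) hqw

theorem integral_radialKineticEnergy_mem_Icc (hU : DifferentiableOn ℝ U (Ioi 0))
    (hU' : DifferentiableOn ℝ (deriv U) (Ioi 0)) {a b m M : ℝ} (ha : 0 < a) (hab : a < b)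
    (hm : 0 < m) (hfa : radialKineticEnergy U E L a = 0) (hfb : radialKineticEnergy U E L b = 0)
    (hcurv : ∀ x ∈ Ioo a b, effPotentialCurvature U L x ∈ Icc m M) :
    ∫ r in a..b, 1 / √(2 * radialKineticEnergy U E L r) ∈ Icc (π / √M) (π / √m) := by
  have hpos : ∀ x ∈ Ioo a b, 0 < x := fun x hx => ha.trans hx.1
  refine integral_one_div_sqrt_two_mul_mem_Icc hab hm
    ((continuousOn_radialKineticEnergy hU.continuousOn).mono fun x hx => ha.trans_le hx.1)
    (fun x hx => hasDerivAt_radialKineticEnergy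
      (hU.differentiableAt (Ioi_mem_nhds (hpos x hx))) (hpos x hx).ne')
    (fun x hx => hasDerivAt_deriv_radialKineticEnergy
      (hU'.differentiableAt (Ioi_mem_nhds (hpos x hx))) (hpos x hx).ne')
    (fun x hx => by simpa using hcurv x hx) hfa hfb

theorem tendsto_Icc_turningPoints_smallSets (hU : DifferentiableOn ℝ U (Ioi 0))
    (hmono : StrictMonoOn (fun r => r ^ 3 * deriv U r) (Ioi 0)) {rs Lmax : ℝ} (hrs : 0 < rs)
    (hLmax : 0 < Lmax) (hLmax_sq : Lmax ^ 2 = rs ^ 3 * deriv U rs)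
    (hcirc : radialKineticEnergy U E Lmax rs = 0) {r₁ r₂ : ℝ → ℝ}
    (hroots : ∀ L, 0 < L → L < Lmax → 0 < r₁ L ∧
      radialKineticEnergy U E L (r₁ L) = 0 ∧ radialKineticEnergy U E L (r₂ L) = 0) :
    Tendsto (fun L => Icc (r₁ L) (r₂ L)) (𝓝[<] Lmax) (𝓝 rs).smallSets := by
  rw [tendsto_smallSets_iff]
  intro s hs
  obtain ⟨a, b, ⟨har, hrb⟩, hab⟩ := mem_nhds_iff_exists_Ioo_subset.1 hs
  set a' := max a (rs / 2)
  have ha'rs : a' < rs := max_lt har (half_lt_self hrs)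
  have ha' : 0 < a' := (half_pos hrs).trans_le (le_max_right _ _)
  -- At `Lmax` the energy has the strict maximum `0` at `rs`; by continuity in `L` it stays
  -- negative at `a'` and `b`, and quasiconcavity then traps both turning points in `(a', b)`.
  have hneg : radialKineticEnergy U E Lmax a' < 0 ∧ radialKineticEnergy U E Lmax b < 0 := by
    rw [← hcirc]
    exact ⟨strictMonoOn_radialKineticEnergy hU hmono hLmax_sq.ge ⟨ha', ha'rs.le⟩ ⟨hrs, le_rfl⟩
        ha'rs,
      strictAntiOn_radialKineticEnergy hU hmono hrs hLmax_sq.le self_mem_Ici (mem_Ici.2 hrb.le)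
        hrb⟩
  have hcont : ∀ x, ContinuousAt (fun L => radialKineticEnergy U E L x) Lmax := fun x => by
    unfold radialKineticEnergy; fun_prop
  filter_upwards [Ioo_mem_nhdsLT hLmax,
    nhdsWithin_le_nhds ((hcont a').eventually (gt_mem_nhds hneg.1)),
    nhdsWithin_le_nhds ((hcont b).eventually (gt_mem_nhds hneg.2))] with L ⟨hL, hLlt⟩ ha'L hbL
  obtain ⟨hr₁, hf₁, hf₂⟩ := hroots L hL hLlt
  have hpos : 0 < radialKineticEnergy U E L rs := by
    have : radialKineticEnergy U E L rs = (Lmax ^ 2 - L ^ 2) / (2 * rs ^ 2) := by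
      rw [← sub_zero (radialKineticEnergy U E L rs), ← hcirc]; unfold radialKineticEnergy; ring
    rw [this]
    exact div_pos (by nlinarith) (by positivity)
  have h₁ : a' < r₁ L := by
    by_contra! h
    have := min_radialKineticEnergy_le hU hmono hr₁ h ha'rs.le (E := E) (L := L)
    rw [hf₁, min_eq_left hpos.le] at this
    linarith
  have h₂ : r₂ L < b := by
    by_contra! h
    have := min_radialKineticEnergy_le hU hmono hrs hrb.le h (E := E) (L := L)
    rw [hf₂, min_eq_right hpos.le] at this
    linarith
  exact (Icc_subset_Ioo ((le_max_left _ _).trans_lt h₁) h₂).trans hab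

end RadialMotion

/-- **Limit of the radial period integral as `L → L_max⁻`.**  Let `U` be a `C²` increasing
spherically symmetric potential with `r ↦ r³U′(r)` strictly increasing, let `r* > 0` solve
`E − U(r) − (r/2)U′(r) = 0`, set `L_max = √(r*³U′(r*))`, and assume the effective potential
curvature `φ_eff″(r*; L_max) = U″(r*) + 3L_max²/r*⁴` is positive.  With `r₁(E,L) < r₂(E,L)`
the two turning points for `0 < L < L_max`, the radial period integral
`T(E,L) = ∫_{r₁}^{r₂} dr/√(2(E − U(r) − L²/(2r²)))` converges, as `L → L_max⁻`, to
`π/√(φ_eff″(r*; L_max))`. -/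
theorem radial_period_limit_L_to_Lmax
    (U : ℝ → ℝ) (hU : ContDiffOn ℝ 2 U (Ioi 0))
    (hU' : ∀ r : ℝ, 0 < r → 0 < deriv U r)
    (hmono : StrictMonoOn (fun r : ℝ => r ^ 3 * deriv U r) (Ioi 0))
    (E : ℝ) (rs : ℝ) (hrs : 0 < rs)
    (hrsroot : E - U rs - rs / 2 * deriv U rs = 0)
    (Lmax : ℝ) (hLmax : Lmax = Real.sqrt (rs ^ 3 * deriv U rs))
    (hcurv : 0 < deriv (deriv U) rs + 3 * Lmax ^ 2 / rs ^ 4)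
    (r1 r2 : ℝ → ℝ)
    (hroots : ∀ L : ℝ, 0 < L → L < Lmax →
      0 < r1 L ∧ r1 L < r2 L ∧
      E - U (r1 L) - L ^ 2 / (2 * (r1 L) ^ 2) = 0 ∧
      E - U (r2 L) - L ^ 2 / (2 * (r2 L) ^ 2) = 0 ∧
      ∀ r : ℝ, 0 < r → E - U r - L ^ 2 / (2 * r ^ 2) = 0 → r = r1 L ∨ r = r2 L) :
    Tendsto
      (fun L : ℝ =>
        ∫ r in (r1 L)..(r2 L), 1 / Real.sqrt (2 * (E - U r - L ^ 2 / (2 * r ^ 2))))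
      (nhdsWithin Lmax (Iio Lmax))
      (nhds (π / Real.sqrt (deriv (deriv U) rs + 3 * Lmax ^ 2 / rs ^ 4))) := by
  have hU₁ : DifferentiableOn ℝ U (Ioi 0) := hU.differentiableOn (by norm_num)
  have hU₂ : ContDiffOn ℝ 1 (deriv U) (Ioi 0) := hU.deriv_of_isOpen isOpen_Ioi (by norm_num)
  have hrs₃ : 0 < rs ^ 3 * deriv U rs := mul_pos (pow_pos hrs 3) (hU' rs hrs)
  have hLmax_pos : 0 < Lmax := hLmax ▸ sqrt_pos.2 hrs₃
  have hLmax_sq : Lmax ^ 2 = rs ^ 3 * deriv U rs := hLmax ▸ sq_sqrt hrs₃.le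
  have hcirc : radialKineticEnergy U E Lmax rs = 0 := by
    unfold radialKineticEnergy; rw [hLmax_sq, ← hrsroot]; field_simp
  have hshrink := tendsto_Icc_turningPoints_smallSets hU₁ hmono hrs hLmax_pos hLmax_sq hcirc
    (r₁ := r1) (r₂ := r2) fun L h₀ h₁ => (hroots L h₀ h₁).imp_right fun h => ⟨h.2.1, h.2.2.1⟩
  set K := deriv (deriv U) rs + 3 * Lmax ^ 2 / rs ^ 4
  have hκ : ContinuousAt (fun p : ℝ × ℝ => effPotentialCurvature U p.1 p.2) (Lmax, rs) :=
    continuousAt_effPotentialCurvature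
      ((hU₂.continuousOn_deriv_of_isOpen isOpen_Ioi le_rfl).continuousAt (Ioi_mem_nhds hrs))
      hrs.ne'
  refine tendsto_of_eventually_mem_Icc (lε := 𝓝[>] 0) (lo := fun ε => π / √(K + ε))
    (hi := fun ε => π / √(K - ε))
    (by simpa using tendsto_nhdsWithin_of_tendsto_nhds (tendsto_div_sqrt_add_mul π hcurv 1))
    (by simpa [← sub_eq_add_neg] using
      tendsto_nhdsWithin_of_tendsto_nhds (tendsto_div_sqrt_add_mul π hcurv (-1))) ?_
  filter_upwards [Ioo_mem_nhdsGT hcurv] with ε ⟨hε, hεK⟩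
  filter_upwards [Ioo_mem_nhdsLT hLmax_pos, eventually_forall_mem_of_tendsto_smallSets
    (hκ.eventually (Icc_mem_nhds (sub_lt_self K hε) (lt_add_of_pos_right K hε)))
    nhdsWithin_le_nhds hshrink] with L ⟨hL, hLlt⟩ hcurvL
  obtain ⟨hr₁, hr₁₂, hf₁, hf₂, -⟩ := hroots L hL hLlt
  exact integral_radialKineticEnergy_mem_Icc hU₁ (hU₂.differentiableOn one_ne_zero) hr₁ hr₁₂
    (by linarith) hf₁ hf₂ fun x hx => hcurvL x (Ioo_subset_Icc_self hx)
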